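/- arXiv:2604.18979 — 6 statements merged into one kernel-verified Lean document; each statement's English description precedes it below -/
import Mathlib

section
/- Let w be a nonempty word over the positive integers and x a positive integer. Define J_x(w) as follows: if the last letter of w exceeds x, write w = u_1 b_1 u_2 b_2 … u_s b_s where each b_j is a letter greater than x and each u_j is a (possibly empty) word all of whose letters are ≤ x; if the last letter of w is ≤ x, write w = u_1 b_1 … u_s b_s where each b_j is a letter ≤ x and each u_j is a (possibly empty) word all of whose letters are > x. In either case set J_x(w) = b_1 u_1 b_2 u_2 … b_s u_s. Then the multiset of weak right-to-left minima of w that are ≤ x equals the multiset of weak right-to-left minima of J_x(w) that are ≤ x; i.e., Rlwmin(w) ∩ ⌈x⌉ = Rlwmin(J_x(w)) ∩ ⌈x⌉. -/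
def rlwmin (l : List ℕ) : Multiset ℕ :=
  ((Finset.range l.length).filter
      (fun t => ∀ j < l.length, t < j → l.getD t 0 ≤ l.getD j 0)).val.map
    (fun t => l.getD t 0)

lemma rlwmin_nil : rlwmin [] = 0 := by unfold rlwmin; simp

lemma rlwmin_cons (a : ℕ) (l : List ℕ) :
    rlwmin (a :: l) = (if ∀ b ∈ l, a ≤ b then {a} else 0) + rlwmin l := by
  classical
  unfold rlwmin
  rw [Finset.filter_val, Finset.filter_val, Finset.range_val, Finset.range_val]
  simp only [List.length_cons]
  have h : (Multiset.range (l.length + 1)) = 0 ::ₘ (Multiset.range l.length).map Nat.succ := by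
    rw [← Multiset.coe_range, List.range_succ_eq_map, ← Multiset.coe_range]
    simp
  rw [h, Multiset.filter_cons, Multiset.filter_map]
  rw [Multiset.map_add, Multiset.map_map]
  have hhead : (∀ j < l.length + 1, 0 < j → (a :: l).getD 0 0 ≤ (a :: l).getD j 0) ↔ ∀ b ∈ l, a ≤ b := by
    constructor
    · intro H b hb
      obtain ⟨j, hj, rfl⟩ := List.mem_iff_getElem.mp hb
      have := H (j+1) (by omega) (by omega)
      simp only [List.getD_cons_zero, List.getD_cons_succ, List.getD_eq_getElem l 0 hj] at this
      exact this
    · intro H j hj h0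
      obtain ⟨j', rfl⟩ : ∃ j', j = j'+1 := ⟨j-1, by omega⟩
      have hj' : j' < l.length := by omega
      simp only [List.getD_cons_zero, List.getD_cons_succ, List.getD_eq_getElem l 0 hj']
      exact H _ (List.getElem_mem hj')
  have hfilt : Multiset.filter ((fun x => ∀ j < l.length + 1, x < j → (a :: l).getD x 0 ≤ (a :: l).getD j 0) ∘ Nat.succ) (Multiset.range l.length)
      = Multiset.filter (fun t => ∀ j < l.length, t < j → l.getD t 0 ≤ l.getD j 0) (Multiset.range l.length) := by
    apply Multiset.filter_congr
    intro t _
    simp only [Function.comp]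
    constructor
    · intro H j hj htj
      have := H (j+1) (by omega) (by omega)
      simpa using this
    · intro H j hj htj
      obtain ⟨j', rfl⟩ : ∃ j', j = j'+1 := ⟨j-1, by omega⟩
      simpa using H j' (by omega) (by omega)
  rw [hfilt]
  congr 1
  · simp only [hhead]
    split <;> simp

/-- The filtered rlwmin depends only on the sublist of letters `≤ x`. -/
lemma rlwmin_filter_eq (x : ℕ) (l : List ℕ) :
    (rlwmin l).filter (· ≤ x) = (rlwmin (l.filter (fun a => a ≤ x))).filter (· ≤ x) := by
  classical
  induction l with
  | nil => simp
  | cons a l ih =>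
    by_cases hax : a ≤ x
    · rw [List.filter_cons_of_pos (by simpa using hax)]
      rw [rlwmin_cons, rlwmin_cons]
      have hcond : (∀ b ∈ l, a ≤ b) ↔ (∀ b ∈ l.filter (fun a => a ≤ x), a ≤ b) := by
        constructor
        · intro H b hb; exact H b (List.mem_of_mem_filter hb)
        · intro H b hb
          by_cases hbx : b ≤ x
          · exact H b (List.mem_filter.mpr ⟨hb, by simpa using hbx⟩)
          · omega
      simp only [hcond]
      rw [Multiset.filter_add, Multiset.filter_add, ih]
    · rw [List.filter_cons_of_neg (by simpa using hax)]
      rw [rlwmin_cons, Multiset.filter_add, ← ih]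
      have key : Multiset.filter (fun y => y ≤ x)
          (if ∀ b ∈ l, a ≤ b then ({a} : Multiset ℕ) else 0) = 0 := by
        split
        · rw [Multiset.filter_singleton, if_neg hax]; rfl
        · simp
      rw [key, zero_add]

/-- if a nonempty word `w` decomposes as `u₁b₁u₂b₂…u_s b_s` where either
(every `b_j > x` and every letter of every `u_j` is `≤ x`) or
(every `b_j ≤ x` and every letter of every `u_j` is `> x`), and
`J_x(w) = b₁u₁b₂u₂…b_s u_s`, then
`Rlwmin(w) ∩ ⌈x⌉ = Rlwmin(J_x(w)) ∩ ⌈x⌉`. -/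
theorem rlwmin_filter_J (x : ℕ) (hx : 0 < x) (s : ℕ) (hs : 0 < s)
    (u : Fin s → List ℕ) (b : Fin s → ℕ) (w v : List ℕ)
    (hw : w = (List.ofFn (fun j => u j ++ [b j])).flatten)
    (hv : v = (List.ofFn (fun j => b j :: u j)).flatten)
    (hpos : ∀ a ∈ w, 0 < a)
    (hcase : (∀ j, x < b j ∧ ∀ a ∈ u j, a ≤ x) ∨ (∀ j, b j ≤ x ∧ ∀ a ∈ u j, x < a)) :
    (rlwmin w).filter (· ≤ x) = (rlwmin v).filter (· ≤ x) := by
  have hfil : w.filter (fun a => a ≤ x) = v.filter (fun a => a ≤ x) := by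
    subst hw hv
    have hofn : (fun j : Fin s => (u j ++ [b j]).filter (fun a => decide (a ≤ x)))
        = (fun j : Fin s => (b j :: u j).filter (fun a => decide (a ≤ x))) := by
      funext j
      rcases hcase with hc | hc
      · obtain ⟨hb, hu⟩ := hc j
        have huu : List.filter (fun a => decide (a ≤ x)) (u j) = u j :=
          List.filter_eq_self.mpr (by intro a ha; simpa using hu a ha)
        have hbb : (decide (b j ≤ x)) = false := by simp; omega
        simp [List.filter_append, huu, hbb]
      · obtain ⟨hb, hu⟩ := hc j
        have huu : List.filter (fun a => decide (a ≤ x)) (u j) = [] :=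
          List.filter_eq_nil_iff.mpr (by intro a ha; simp; exact hu a ha)
        have hbb : (decide (b j ≤ x)) = true := by simpa using hb
        simp [List.filter_append, huu, hbb]
    rw [List.filter_flatten, List.filter_flatten, List.map_ofFn, List.map_ofFn,
      Function.comp_def, Function.comp_def]
    exact congrArg (fun f => (List.ofFn f).flatten) hofn
  rw [rlwmin_filter_eq x w, rlwmin_filter_eq x v, hfil]
end

section
/- Let st be a statistic on words that is standard, meaning st(std(w)) = st(w) for every word w, and let S ⊆ [n−1]. Define ist(π) = st(π^{-1}) for permutations π. Then for every permutation π ∈ S_n with Des(π) ⊆ S, ist(π) = st(θ(π)), where θ is the block-encoding bijection from permutations with descent set contained in S to words of the corresponding content. -/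
/-- The word `θ(π)` associated to a permutation `π` with descent set contained in `S`. -/
def thetaWord (n k : ℕ) (s : ℕ → ℕ) (π : Equiv.Perm (Fin n)) : Fin n → ℕ :=
  fun i => ((Finset.range (k + 1)).filter (fun t => s t < (π.symm i : ℕ) + 1)).card

/-- If no block boundary lies in `(a, b]`, then `π` is increasing from `a` to `b`. -/
lemma theta_incr {n k : ℕ} {s : ℕ → ℕ} {π : Equiv.Perm (Fin n)}
    (hdes : ∀ p : Fin n × Fin n, (p.2 : ℕ) = (p.1 : ℕ) + 1 → π p.2 < π p.1 →
      ∃ j ∈ Finset.Icc 1 k, (p.1 : ℕ) + 1 = s j) :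
    ∀ m (a b : Fin n), (b : ℕ) = (a : ℕ) + m →
      (∀ t, t ≤ k → s t ≤ (b : ℕ) → s t ≤ (a : ℕ)) → π a ≤ π b := by
  intro m
  induction m with
  | zero =>
    intro a b hb _
    have : a = b := Fin.ext (by omega)
    simp [this]
  | succ m ih =>
    intro a b hb hcond
    have hcn : (a : ℕ) + m < n := by have := b.isLt; omega
    set c : Fin n := ⟨(a : ℕ) + m, hcn⟩ with hc
    have h1 : π a ≤ π c := by
      refine ih a c rfl ?_
      intro t ht hst
      exact hcond t ht (by simp [hc] at hst ⊢; omega)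
    have h2 : π c ≤ π b := by
      by_contra h
      push_neg at h
      obtain ⟨j, hj, hjs⟩ := hdes (c, b) (by simp [hc]; omega) h
      simp only [Finset.mem_Icc] at hj
      have := hcond j hj.2 (by simp [hc] at hjs; omega)
      simp [hc] at hjs
      omega
    exact le_trans h1 h2

/-- if `st` is a standard statistic on words (invariant under
standardization, where the standardization of `w` is the unique permutation `τ` with
`τ i < τ j ↔ w i < w j ∨ (w i = w j ∧ i < j)`, viewed as a word via `i ↦ τ i + 1`),
and `π ∈ S_n` has `Des(π) ⊆ S`, then `ist(π) := st(π⁻¹) = st(θ(π))`. -/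
theorem ist_eq_st_theta (st : (n : ℕ) → (Fin n → ℕ) → ℕ)
    (hstd : ∀ (n : ℕ) (w : Fin n → ℕ) (τ : Equiv.Perm (Fin n)),
      (∀ i j : Fin n, τ i < τ j ↔ (w i < w j ∨ (w i = w j ∧ i < j))) →
      st n (fun i => (τ i : ℕ) + 1) = st n w)
    (n k : ℕ) (s : ℕ → ℕ)
    (hs0 : s 0 = 0) (hsn : s (k + 1) = n) (hmono : ∀ j ≤ k, s j < s (j + 1))
    (π : Equiv.Perm (Fin n))
    (hdes : ∀ p : Fin n × Fin n, (p.2 : ℕ) = (p.1 : ℕ) + 1 → π p.2 < π p.1 →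
      ∃ j ∈ Finset.Icc 1 k, (p.1 : ℕ) + 1 = s j) :
    st n (fun i => (π.symm i : ℕ) + 1) = st n (thetaWord n k s π) := by
  apply hstd n (thetaWord n k s π) π.symm
  intro i j
  set a := π.symm i with ha
  set b := π.symm j with hb
  have hia : i = π a := by simp [ha]
  have hjb : j = π b := by simp [hb]
  set Fa := ((Finset.range (k + 1)).filter (fun t => s t < (a : ℕ) + 1)) with hFa
  set Fb := ((Finset.range (k + 1)).filter (fun t => s t < (b : ℕ) + 1)) with hFb
  show a < b ↔ Fa.card < Fb.card ∨ (Fa.card = Fb.card ∧ i < j)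
  have hsub : ∀ (x y : Fin n), x ≤ y →
      ((Finset.range (k + 1)).filter (fun t => s t < (x : ℕ) + 1)) ⊆
      ((Finset.range (k + 1)).filter (fun t => s t < (y : ℕ) + 1)) := by
    intro x y hxy
    intro t ht
    simp only [Finset.mem_filter, Finset.mem_range] at ht ⊢
    have : (x : ℕ) ≤ (y : ℕ) := hxy
    omega
  constructor
  · intro hab
    have hcard : Fa.card ≤ Fb.card := Finset.card_le_card (hsub a b (le_of_lt hab))
    rcases lt_or_eq_of_le hcard with h | h
    · exact Or.inl h
    · refine Or.inr ⟨h, ?_⟩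
      have heq : Fa = Fb := Finset.eq_of_subset_of_card_le (hsub a b (le_of_lt hab)) (le_of_eq h.symm)
      have hcond : ∀ t, t ≤ k → s t ≤ (b : ℕ) → s t ≤ (a : ℕ) := by
        intro t ht hst
        have : t ∈ Fb := by
          simp [hFb, Finset.mem_filter, Finset.mem_range]; omega
        rw [← heq] at this
        simp [hFa, Finset.mem_filter] at this
        omega
      have hle : π a ≤ π b := theta_incr hdes ((b : ℕ) - (a : ℕ)) a b (by omega) hcond
      have hne : π a ≠ π b := fun h => absurd (π.injective h) (Fin.ne_of_lt hab)
      rw [hia, hjb]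
      exact lt_of_le_of_ne hle hne
  · intro h
    by_contra hab
    push_neg at hab
    have hcard : Fb.card ≤ Fa.card := Finset.card_le_card (hsub b a hab)
    rcases lt_or_eq_of_le hab with hba | hba
    · rcases h with h | ⟨h1, h2⟩
      · omega
      · have heq : Fb = Fa := Finset.eq_of_subset_of_card_le (hsub b a hab) (le_of_eq h1)
        have hcond : ∀ t, t ≤ k → s t ≤ (a : ℕ) → s t ≤ (b : ℕ) := by
          intro t ht hst
          have : t ∈ Fa := by
            simp [hFa, Finset.mem_filter, Finset.mem_range]; omega
          rw [← heq] at this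
          simp [hFb, Finset.mem_filter] at this
          omega
        have hle : π b ≤ π a := theta_incr hdes ((a : ℕ) - (b : ℕ)) b a (by omega) hcond
        rw [hia, hjb] at h2
        exact absurd h2 (not_lt_of_ge hle)
    · have hij : i = j := by rw [hia, hjb, hba]
      rcases h with h | ⟨h1, h2⟩
      · have : Fa = Fb := by rw [hFa, hFb, hba]
        omega
      · rw [hij] at h2
        exact absurd h2 (lt_irrefl _)
end

section
/- The inversion statistic inv is standard: for every word w, inv(std(w)) = inv(w), where inv(w) = |{(i,j) : i < j and w_i > w_j}|. -/
/-- The number of inversions of a word: pairs `(i, j)` with `i < j` and `w i > w j`. -/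
def inv {n : ℕ} {β : Type*} [LinearOrder β] (w : Fin n → β) : ℕ :=
  (Finset.univ.filter (fun p : Fin n × Fin n => p.1 < p.2 ∧ w p.2 < w p.1)).card

/-- `inv` is standard: `inv (std w) = inv w`, where `std w` is the
standardization of `w` (the unique permutation `τ` with
`τ i < τ j ↔ w i < w j ∨ (w i = w j ∧ i < j)`), viewed as a word via `i ↦ τ i + 1`. -/
theorem inv_std {n : ℕ} (w : Fin n → ℕ) (τ : Equiv.Perm (Fin n))
    (hτ : ∀ i j : Fin n, τ i < τ j ↔ (w i < w j ∨ (w i = w j ∧ i < j))) :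
    inv (fun i => (τ i : ℕ) + 1) = inv w := by
  unfold inv
  congr 1
  apply Finset.filter_congr
  intro p _
  constructor
  · rintro ⟨h1, h2⟩
    refine ⟨h1, ?_⟩
    have hlt : τ p.2 < τ p.1 := by
      have := Nat.lt_of_add_lt_add_right h2
      exact_mod_cast this
    rcases (hτ p.2 p.1).mp hlt with h | ⟨_, h⟩
    · exact h
    · exact absurd h1 (not_lt.mpr h.le)
  · rintro ⟨h1, h2⟩
    refine ⟨h1, ?_⟩
    have := (hτ p.2 p.1).mpr (Or.inl h2)
    have : (τ p.2 : ℕ) < τ p.1 := this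
    show (τ p.2 : ℕ) + 1 < (τ p.1 : ℕ) + 1
    omega
end

section
/- The major index maj is standard: for every word w, maj(std(w)) = maj(w), where maj(w) is the sum of all positions i with w_i > w_{i+1}. -/
/-- The major index of a word: the sum of the (1-based) positions `i` with
`w i > w (i+1)`. -/
def maj {n : ℕ} {β : Type*} [LinearOrder β] (w : Fin n → β) : ℕ :=
  ∑ p ∈ Finset.univ.filter
      (fun p : Fin n × Fin n => (p.2 : ℕ) = (p.1 : ℕ) + 1 ∧ w p.2 < w p.1),
    ((p.1 : ℕ) + 1)

/-- `maj` is standard: `maj (std w) = maj w`, where `std w` is the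
standardization of `w` (the unique permutation `τ` with
`τ i < τ j ↔ w i < w j ∨ (w i = w j ∧ i < j)`), viewed as a word via `i ↦ τ i + 1`. -/
theorem maj_std {n : ℕ} (w : Fin n → ℕ) (τ : Equiv.Perm (Fin n))
    (hτ : ∀ i j : Fin n, τ i < τ j ↔ (w i < w j ∨ (w i = w j ∧ i < j))) :
    maj (fun i => (τ i : ℕ) + 1) = maj w := by
  unfold maj
  congr 1
  apply Finset.filter_congr
  intro p _
  simp only [add_lt_add_iff_right, and_congr_right_iff]
  intro hp
  have hlt : p.1 < p.2 := by
    rw [Fin.lt_def, hp]; omega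
  rw [show ((τ p.2 : ℕ) < (τ p.1 : ℕ)) ↔ τ p.2 < τ p.1 from Iff.rfl, hτ]
  constructor
  · rintro (h | ⟨he, h⟩)
    · exact h
    · exact absurd h (not_lt.mpr hlt.le)
  · exact Or.inl
end

section
/- Kadell's statistic inv_r is standard: for every word w and every positive integer r, inv_r(std(w)) = inv_r(w), where inv_r(w) = |{(i,j) : i < j < i + r, w_i > w_j}| + Σ_{i : w_i > w_{i+r}} i. -/
/-- Kadell's statistic `inv_r` (1-based positions):
`inv_r(w) = |{(i,j) : i < j < i + r, w i > w j}| + Σ_{i : w i > w (i+r)} i`. -/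
def invr {n : ℕ} {β : Type*} [LinearOrder β] (r : ℕ) (w : Fin n → β) : ℕ :=
  (Finset.univ.filter (fun p : Fin n × Fin n =>
      p.1 < p.2 ∧ (p.2 : ℕ) < (p.1 : ℕ) + r ∧ w p.2 < w p.1)).card +
  ∑ p ∈ Finset.univ.filter
      (fun p : Fin n × Fin n => (p.2 : ℕ) = (p.1 : ℕ) + r ∧ w p.2 < w p.1),
    ((p.1 : ℕ) + 1)

/-- `inv_r` is standard: `inv_r (std w) = inv_r w` for every positive
integer `r`, where `std w` is the standardization of `w` (the unique permutation `τ`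
with `τ i < τ j ↔ w i < w j ∨ (w i = w j ∧ i < j)`), viewed as a word. -/
theorem invr_std {n : ℕ} (r : ℕ) (hr : 1 ≤ r) (w : Fin n → ℕ) (τ : Equiv.Perm (Fin n))
    (hτ : ∀ i j : Fin n, τ i < τ j ↔ (w i < w j ∨ (w i = w j ∧ i < j))) :
    invr r (fun i => (τ i : ℕ) + 1) = invr r w := by
  have key : ∀ i j : Fin n, i < j → (((τ j : ℕ) + 1 < (τ i : ℕ) + 1) ↔ w j < w i) := by
    intro i j hij
    rw [Nat.add_lt_add_iff_right, ← Fin.lt_iff_val_lt_val, hτ]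
    constructor
    · rintro (h | ⟨_, h⟩)
      · exact h
      · exact absurd hij (not_lt.2 h.le)
    · exact Or.inl
  unfold invr
  congr 1
  · congr 1
    apply Finset.filter_congr
    intro p _
    simp only
    constructor <;> rintro ⟨h1, h2, h3⟩ <;>
      exact ⟨h1, h2, by rw [key _ _ h1] at *; exact h3⟩
  · apply Finset.sum_congr _ (fun _ _ => rfl)
    apply Finset.filter_congr
    intro p _
    simp only
    constructor <;> rintro ⟨h1, h2⟩ <;>
    · have hlt : p.1 < p.2 := by
        rw [Fin.lt_iff_val_lt_val, h1]; omega
      exact ⟨h1, by rw [key _ _ hlt] at *; exact h2⟩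
end

section
/- Let α = (α_1, …, α_m) be a composition of n and let I_α be the set of 221-avoiding words in S_α (words containing no subword order-isomorphic to 221). Then Σ_{w ∈ I_α} q^{inv(w)} = Π_{i=1}^{m−1} [α_1 + α_2 + ⋯ + α_i + 1]_q. In particular, |I_α| = Π_{i=1}^{m−1} (α_1 + ⋯ + α_i + 1). -/
open Polynomial
open scoped Classical

/-- The `q`-integer `[k]_q = 1 + q + ⋯ + q^{k-1}`. -/
noncomputable def qint (k : ℕ) : Polynomial ℤ := ∑ i ∈ Finset.range k, X ^ i

/-- The set `I_α` of 221-avoiding words of content `α` (letters in `{1,…,m}` encoded as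
`Fin m` with letter value `(w i) + 1`; the letter `j` occurs exactly `α j` times). -/
noncomputable def Iset (m n : ℕ) (α : ℕ → ℕ) : Finset (Fin n → Fin m) :=
  Finset.univ.filter (fun w =>
    (∀ j ∈ Finset.Icc 1 m, (Finset.univ.filter (fun i => (w i : ℕ) + 1 = j)).card = α j) ∧
    ¬ ∃ i j k : Fin n, i < j ∧ j < k ∧ w i = w j ∧ w k < w j)

open Finset

lemma card_filter_le' (N k : ℕ) :
    (Finset.univ.filter fun i : Fin N => k ≤ (i : ℕ)).card = N - k := by
  classical
  rcases le_or_gt N k with h | h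
  · rw [Nat.sub_eq_zero_of_le h, Finset.card_eq_zero, Finset.filter_eq_empty_iff]
    intro i _; have := i.isLt; omega
  · have : (Finset.univ.filter fun i : Fin N => k ≤ (i : ℕ)) = Finset.Ici (⟨k, h⟩ : Fin N) := by
      ext i; simp [Fin.le_def]
    rw [this, Fin.card_Ici]

lemma upward_closed_eq (N : ℕ) (S : Finset (Fin N))
    (hS : ∀ i ∈ S, ∀ j : Fin N, i ≤ j → j ∈ S) :
    S = Finset.univ.filter fun i : Fin N => N - S.card ≤ (i : ℕ) := by
  classical
  have hcard : S.card ≤ N := by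
    simpa using Finset.card_le_card (Finset.subset_univ S)
  have hsub : S ⊆ Finset.univ.filter fun i : Fin N => N - S.card ≤ (i : ℕ) := by
    intro i hi
    have h1 : (Finset.univ.filter fun j : Fin N => (i : ℕ) ≤ (j : ℕ)) ⊆ S := by
      intro j hj
      simp only [Finset.mem_filter, Finset.mem_univ, true_and] at hj
      exact hS i hi j (by rw [Fin.le_def]; exact hj)
    have h2 := Finset.card_le_card h1
    rw [card_filter_le'] at h2
    simp only [Finset.mem_filter, Finset.mem_univ, true_and]
    have := i.isLt
    omega
  refine Finset.eq_of_subset_of_card_le hsub ?_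
  rw [card_filter_le']
  omega

section Insertion

variable {m n' a : ℕ}

def iotaF (a : ℕ) (ha : 1 ≤ a) (p : Fin (n' + 1)) (j : Fin n') : Fin (n' + a) :=
  if (j : ℕ) < (p : ℕ) then ⟨j, by have := j.isLt; omega⟩
  else ⟨(j : ℕ) + 1, by have := j.isLt; omega⟩

def insF (a : ℕ) (w : Fin n' → Fin m) (p : Fin (n' + 1)) : Fin (n' + a) → Fin (m + 1) :=
  fun i =>
    if h : (i : ℕ) < (p : ℕ) then
      (w ⟨i, by have := p.isLt; omega⟩).castSucc
    else if h2 : (p : ℕ) < (i : ℕ) ∧ (i : ℕ) ≤ n' then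
      (w ⟨(i : ℕ) - 1, by omega⟩).castSucc
    else Fin.last m

lemma iotaF_val (ha : 1 ≤ a) (p : Fin (n' + 1)) (j : Fin n') :
    (iotaF a ha p j : ℕ) = if (j : ℕ) < (p : ℕ) then (j : ℕ) else (j : ℕ) + 1 := by
  unfold iotaF
  split <;> simp_all

lemma iotaF_lt_iff (ha : 1 ≤ a) (p : Fin (n' + 1)) (j k : Fin n') :
    iotaF a ha p j < iotaF a ha p k ↔ j < k := by
  rw [Fin.lt_def, Fin.lt_def, iotaF_val, iotaF_val]
  split <;> split <;> omega

lemma iotaF_injective (ha : 1 ≤ a) (p : Fin (n' + 1)) :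
    Function.Injective (iotaF a ha p) := by
  intro j k h
  have h1 := (iotaF_lt_iff ha p j k)
  have h2 := (iotaF_lt_iff ha p k j)
  rw [h] at h1
  rw [h] at h2
  simp at h1 h2
  exact le_antisymm h2 h1

lemma iotaF_val_ne (ha : 1 ≤ a) (p : Fin (n' + 1)) (j : Fin n') :
    ((iotaF a ha p j : ℕ) ≠ (p : ℕ)) ∧ (iotaF a ha p j : ℕ) ≤ n' := by
  rw [iotaF_val]
  have hj := j.isLt
  split <;> omega

lemma insF_lt (w : Fin n' → Fin m) (p : Fin (n' + 1)) (i : Fin (n' + a))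
    (h : (i : ℕ) < (p : ℕ)) :
    insF a w p i = (w ⟨i, by have := p.isLt; omega⟩).castSucc := by
  unfold insF
  rw [dif_pos h]

lemma insF_gt (w : Fin n' → Fin m) (p : Fin (n' + 1)) (i : Fin (n' + a))
    (h : (p : ℕ) < (i : ℕ)) (h1 : (i : ℕ) ≤ n') :
    insF a w p i = (w ⟨(i : ℕ) - 1, by omega⟩).castSucc := by
  unfold insF
  rw [dif_neg (by omega), dif_pos ⟨h, h1⟩]

lemma insF_iotaF (ha : 1 ≤ a) (w : Fin n' → Fin m) (p : Fin (n' + 1)) (j : Fin n') :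
    insF a w p (iotaF a ha p j) = (w j).castSucc := by
  have hv := iotaF_val ha p j
  have hj := j.isLt
  by_cases h : (j : ℕ) < (p : ℕ)
  · rw [if_pos h] at hv
    rw [insF_lt w p _ (by omega)]
    congr 1
    apply congrArg
    exact Fin.ext (by simpa using hv)
  · rw [if_neg h] at hv
    rw [insF_gt w p _ (by omega) (by omega)]
    congr 1
    apply congrArg
    exact Fin.ext (by simp [hv])

lemma insF_eq_last_iff (w : Fin n' → Fin m) (p : Fin (n' + 1)) (i : Fin (n' + a)) :
    insF a w p i = Fin.last m ↔ ((i : ℕ) = (p : ℕ) ∨ n' < (i : ℕ)) := by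
  unfold insF
  split
  · next h =>
    simp only [iff_false_intro (Fin.castSucc_lt_last _).ne, false_iff]
    push_neg
    have := p.isLt; omega
  · next h =>
    split
    · next h2 =>
      simp only [iff_false_intro (Fin.castSucc_lt_last _).ne, false_iff]
      push_neg; omega
    · next h2 =>
      simp only [true_iff, eq_self_iff_true]
      omega

lemma iotaF_surj (ha : 1 ≤ a) (p : Fin (n' + 1)) (i : Fin (n' + a))
    (h1 : (i : ℕ) ≤ n') (h2 : (i : ℕ) ≠ (p : ℕ)) : ∃ j, iotaF a ha p j = i := by
  rcases lt_or_gt_of_ne h2 with h | h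
  · refine ⟨⟨i, by have := p.isLt; omega⟩, ?_⟩
    apply Fin.ext
    rw [iotaF_val]
    simp [h]
  · refine ⟨⟨(i : ℕ) - 1, by omega⟩, ?_⟩
    apply Fin.ext
    rw [iotaF_val]
    simp
    split <;> omega

end Insertion

section Insertion2
variable {m n' a : ℕ}

def AvoidsW {N M : ℕ} (w : Fin N → Fin M) : Prop :=
  ¬ ∃ i j k : Fin N, i < j ∧ j < k ∧ w i = w j ∧ w k < w j

lemma insF_ne_last_elim (ha : 1 ≤ a) (w : Fin n' → Fin m) (p : Fin (n' + 1))
    (i : Fin (n' + a)) (h : insF a w p i ≠ Fin.last m) :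
    ∃ j : Fin n', iotaF a ha p j = i := by
  rw [Ne, insF_eq_last_iff] at h
  push_neg at h
  exact iotaF_surj ha p i (by omega) h.1

lemma card_insF_last (ha : 1 ≤ a) (w : Fin n' → Fin m) (p : Fin (n' + 1)) :
    (Finset.univ.filter fun i : Fin (n' + a) => insF a w p i = Fin.last m).card = a := by
  classical
  have hp : (p : ℕ) ≤ n' := by have := p.isLt; omega
  have hfe : (Finset.univ.filter fun i : Fin (n' + a) => insF a w p i = Fin.last m)
      = (Finset.univ.filter fun i : Fin (n' + a) => (i : ℕ) = (p : ℕ))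
        ∪ (Finset.univ.filter fun i : Fin (n' + a) => n' + 1 ≤ (i : ℕ)) := by
    ext i
    simp only [Finset.mem_filter, Finset.mem_univ, true_and, Finset.mem_union,
      insF_eq_last_iff]
    omega
  rw [hfe, Finset.card_union_of_disjoint, card_filter_le']
  · have h1 : (Finset.univ.filter fun i : Fin (n' + a) => (i : ℕ) = (p : ℕ))
        = {(⟨p, by omega⟩ : Fin (n' + a))} := by
      ext i
      simp [Fin.ext_iff]
    rw [h1, Finset.card_singleton]
    omega
  · rw [Finset.disjoint_left]
    intro i hi hi2
    simp only [Finset.mem_filter, Finset.mem_univ, true_and] at hi hi2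
    omega

lemma card_insF_val (ha : 1 ≤ a) (w : Fin n' → Fin m) (p : Fin (n' + 1)) (j : ℕ)
    (hj : j ≤ m) :
    (Finset.univ.filter fun i : Fin (n' + a) => (insF a w p i : ℕ) + 1 = j).card
      = (Finset.univ.filter fun k : Fin n' => (w k : ℕ) + 1 = j).card := by
  classical
  have hfe : (Finset.univ.filter fun i : Fin (n' + a) => (insF a w p i : ℕ) + 1 = j)
      = (Finset.univ.filter fun k : Fin n' => (w k : ℕ) + 1 = j).image (iotaF a ha p) := by
    ext i
    simp only [Finset.mem_filter, Finset.mem_univ, true_and, Finset.mem_image]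
    constructor
    · intro hi
      have hne : insF a w p i ≠ Fin.last m := by
        intro he
        rw [he, Fin.val_last] at hi
        omega
      obtain ⟨k, hk⟩ := insF_ne_last_elim ha w p i hne
      refine ⟨k, ?_, hk⟩
      rw [← hk, insF_iotaF ha w p k] at hi
      simpa using hi
    · rintro ⟨k, hk, rfl⟩
      rw [insF_iotaF ha w p k]
      simpa using hk
  rw [hfe, Finset.card_image_of_injective _ (iotaF_injective ha p)]

lemma avoids_insF (ha : 1 ≤ a) (w : Fin n' → Fin m) (p : Fin (n' + 1))
    (hw : AvoidsW w) : AvoidsW (insF a w p) := by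
  rintro ⟨i, j, k, hij, hjk, heq, hlt⟩
  by_cases hj : insF a w p j = Fin.last m
  · have hk : insF a w p k ≠ Fin.last m := by
      intro he
      rw [he, hj] at hlt
      exact lt_irrefl _ hlt
    have hi : insF a w p i = Fin.last m := heq.trans hj
    rw [Ne, insF_eq_last_iff] at hk
    push_neg at hk
    rw [insF_eq_last_iff] at hj hi
    have hkj : (j : ℕ) < (k : ℕ) := hjk
    have hij' : (i : ℕ) < (j : ℕ) := hij
    have hp := p.isLt
    omega
  · have hi : insF a w p i ≠ Fin.last m := by rw [heq]; exact hj
    have hk : insF a w p k ≠ Fin.last m := by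
      intro he
      have := hlt.trans_le (Fin.le_last _)
      rw [he] at hlt
      exact absurd hlt (not_lt.mpr (Fin.le_last _))
    obtain ⟨i', hi'⟩ := insF_ne_last_elim ha w p i hi
    obtain ⟨j', hj'⟩ := insF_ne_last_elim ha w p j hj
    obtain ⟨k', hk'⟩ := insF_ne_last_elim ha w p k hk
    apply hw
    refine ⟨i', j', k', ?_, ?_, ?_, ?_⟩
    · rw [← iotaF_lt_iff ha p, hi', hj']; exact hij
    · rw [← iotaF_lt_iff ha p, hj', hk']; exact hjk
    · have := heq
      rw [← hi', ← hj', insF_iotaF, insF_iotaF] at this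
      exact Fin.castSucc_injective _ this
    · have := hlt
      rw [← hk', ← hj', insF_iotaF, insF_iotaF] at this
      exact (Fin.castSucc_lt_castSucc_iff).mp this

end Insertion2

section Insertion3
variable {m n' a : ℕ}

lemma avoids_of_insF (ha : 1 ≤ a) (w : Fin n' → Fin m) (p : Fin (n' + 1))
    (hw : AvoidsW (insF a w p)) : AvoidsW w := by
  rintro ⟨i, j, k, hij, hjk, heq, hlt⟩
  apply hw
  refine ⟨iotaF a ha p i, iotaF a ha p j, iotaF a ha p k, ?_, ?_, ?_, ?_⟩
  · exact (iotaF_lt_iff ha p i j).mpr hij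
  · exact (iotaF_lt_iff ha p j k).mpr hjk
  · rw [insF_iotaF, insF_iotaF, heq]
  · rw [insF_iotaF, insF_iotaF]
    exact (Fin.castSucc_lt_castSucc_iff).mpr hlt

lemma inv_insF (ha : 1 ≤ a) (w : Fin n' → Fin m) (p : Fin (n' + 1)) :
    inv (insF a w p) = inv w + (n' - (p : ℕ)) := by
  classical
  have hp : (p : ℕ) ≤ n' := by have := p.isLt; omega
  have hppv : ((⟨(p : ℕ), by omega⟩ : Fin (n' + a)) : ℕ) = (p : ℕ) := rfl
  set A : Finset (Fin (n' + a) × Fin (n' + a)) :=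
    (Finset.univ.filter fun q : Fin n' × Fin n' => q.1 < q.2 ∧ w q.2 < w q.1).image
      (fun q => (iotaF a ha p q.1, iotaF a ha p q.2)) with hA
  set B : Finset (Fin (n' + a) × Fin (n' + a)) :=
    (Finset.univ.filter fun b : Fin n' => (p : ℕ) ≤ (b : ℕ)).image
      (fun b => ((⟨(p : ℕ), by omega⟩ : Fin (n' + a)), iotaF a ha p b)) with hB
  have hsplit : (Finset.univ.filter fun q : Fin (n' + a) × Fin (n' + a) =>
      q.1 < q.2 ∧ insF a w p q.2 < insF a w p q.1) = A ∪ B := by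
    ext q
    simp only [Finset.mem_filter, Finset.mem_univ, true_and, Finset.mem_union, hA, hB,
      Finset.mem_image, Finset.mem_filter, Prod.ext_iff]
    constructor
    · rintro ⟨hq12, hqv⟩
      have h2 : insF a w p q.2 ≠ Fin.last m := by
        intro he
        rw [he] at hqv
        exact absurd hqv (not_lt.mpr (Fin.le_last _))
      obtain ⟨b', hb'⟩ := insF_ne_last_elim ha w p q.2 h2
      have hb'le := iotaF_val_ne ha p b'
      by_cases h1 : insF a w p q.1 = Fin.last m
      · right
        rw [insF_eq_last_iff] at h1
        have hq2n : (q.2 : ℕ) ≤ n' := by rw [← hb']; exact hb'le.2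
        have hq12' : (q.1 : ℕ) < (q.2 : ℕ) := hq12
        have hq1p : (q.1 : ℕ) = (p : ℕ) := by omega
        refine ⟨b', ?_, ?_, hb'⟩
        · try simp only [Finset.mem_univ, true_and]
          have hlt2 : (p : ℕ) < (iotaF a ha p b' : ℕ) := by rw [hb']; omega
          rw [iotaF_val] at hlt2
          split at hlt2 <;> omega
        · exact Fin.ext (by rw [hppv, hq1p])
      · left
        obtain ⟨a', ha'⟩ := insF_ne_last_elim ha w p q.1 h1
        refine ⟨(a', b'), ?_, ha', hb'⟩
        simp only [Finset.mem_filter, Finset.mem_univ, true_and]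
        constructor
        · rw [← iotaF_lt_iff ha p, ha', hb']; exact hq12
        · have := hqv
          rw [← ha', ← hb', insF_iotaF, insF_iotaF] at this
          exact (Fin.castSucc_lt_castSucc_iff).mp this
    · rintro (⟨q', hq', he1, he2⟩ | ⟨b', hb', he1, he2⟩)
      · try simp only [Finset.mem_filter, Finset.mem_univ, true_and] at hq'
        constructor
        · rw [← he1, ← he2, iotaF_lt_iff]; exact hq'.1
        · rw [← he1, ← he2, insF_iotaF, insF_iotaF]
          exact (Fin.castSucc_lt_castSucc_iff).mpr hq'.2
      · try simp only [Finset.mem_filter, Finset.mem_univ, true_and] at hb'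
        have hval : ((iotaF a ha p b' : ℕ)) = (b' : ℕ) + 1 := by
          rw [iotaF_val, if_neg (by omega)]
        constructor
        · rw [← he1, ← he2, Fin.lt_def, hppv, hval]
          omega
        · rw [← he1, ← he2]
          have h1 : insF a w p (⟨(p : ℕ), by omega⟩ : Fin (n' + a)) = Fin.last m := by
            rw [insF_eq_last_iff]
            left
            rw [hppv]
          rw [h1, insF_iotaF]
          exact Fin.castSucc_lt_last _
  have hAB : Disjoint A B := by
    rw [Finset.disjoint_left]
    rintro q hqA hqB
    rw [hA, Finset.mem_image] at hqA
    rw [hB, Finset.mem_image] at hqB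
    obtain ⟨q', _, he⟩ := hqA
    obtain ⟨b', _, he2⟩ := hqB
    have h1 : q.1 = iotaF a ha p q'.1 := by rw [← he]
    have h2 : (q.1 : ℕ) = (p : ℕ) := by rw [← he2]
    have h3 := (iotaF_val_ne ha p q'.1).1
    apply h3
    rw [← h1, h2]
  have hcA : A.card = inv w := by
    rw [hA, Finset.card_image_of_injective]
    · rfl
    · intro q r h
      rw [Prod.ext_iff] at h ⊢
      exact ⟨iotaF_injective ha p h.1, iotaF_injective ha p h.2⟩
  have hcB : B.card = n' - (p : ℕ) := by
    rw [hB, Finset.card_image_of_injective, card_filter_le']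
    intro b c h
    rw [Prod.ext_iff] at h
    exact iotaF_injective ha p h.2
  rw [inv, hsplit, Finset.card_union_of_disjoint hAB, hcA, hcB]

end Insertion3

lemma qint_sum_fin (n' : ℕ) :
    ∑ p : Fin (n' + 1), (X : Polynomial ℤ) ^ (n' - (p : ℕ)) = qint (n' + 1) := by
  rw [Fin.sum_univ_eq_sum_range (fun i => (X : Polynomial ℤ) ^ (n' - i)) (n' + 1), qint]
  rw [← Finset.sum_range_reflect (fun i => (X : Polynomial ℤ) ^ i) (n' + 1)]
  apply Finset.sum_congr rfl
  intro i hi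
  rfl

lemma mem_Iset_iff {M N : ℕ} (α : ℕ → ℕ) (w : Fin N → Fin M) :
    w ∈ Iset M N α ↔
      ((∀ j ∈ Finset.Icc 1 M, (Finset.univ.filter (fun i => (w i : ℕ) + 1 = j)).card = α j) ∧
        AvoidsW w) := by
  simp only [Iset, Finset.mem_filter, Finset.mem_univ, true_and, AvoidsW]

lemma insF_mem_Iset {m n' : ℕ} (a : ℕ) (ha : 1 ≤ a) (α : ℕ → ℕ) (hma : α (m + 1) = a)
    (w : Fin n' → Fin m) (p : Fin (n' + 1)) (hw : w ∈ Iset m n' α) :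
    insF a w p ∈ Iset (m + 1) (n' + a) α := by
  rw [mem_Iset_iff] at hw ⊢
  obtain ⟨hc, hav⟩ := hw
  constructor
  · intro j hj
    simp only [Finset.mem_Icc] at hj
    rcases eq_or_lt_of_le hj.2 with he | hlt
    · subst he
      have h2 : (Finset.univ.filter fun i : Fin (n' + a) => (insF a w p i : ℕ) + 1 = m + 1)
          = (Finset.univ.filter fun i : Fin (n' + a) => insF a w p i = Fin.last m) := by
        ext i
        simp only [Finset.mem_filter, Finset.mem_univ, true_and]
        rw [Fin.ext_iff, Fin.val_last]
        omega
      rw [h2, hma]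
      exact card_insF_last ha w p
    · have hjm : j ≤ m := by omega
      rw [card_insF_val ha w p j hjm]
      exact hc j (Finset.mem_Icc.mpr ⟨hj.1, hjm⟩)
  · exact avoids_insF ha w p hav

lemma insF_inj {m n' : ℕ} (a : ℕ) (ha : 1 ≤ a) (w1 w2 : Fin n' → Fin m)
    (p1 p2 : Fin (n' + 1)) (h : insF a w1 p1 = insF a w2 p2) : w1 = w2 ∧ p1 = p2 := by
  have hp1 : (p1 : ℕ) ≤ n' := by have := p1.isLt; omega
  have hp2 : (p2 : ℕ) ≤ n' := by have := p2.isLt; omega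
  have hpp : p1 = p2 := by
    have h1 : insF a w1 p1 (⟨(p1 : ℕ), by omega⟩ : Fin (n' + a)) = Fin.last m := by
      rw [insF_eq_last_iff]; left; rfl
    rw [h, insF_eq_last_iff] at h1
    apply Fin.ext
    simp only [Fin.val_mk] at h1
    omega
  subst hpp
  refine ⟨funext fun j => ?_, rfl⟩
  apply Fin.castSucc_injective
  rw [← insF_iotaF ha w1 p1 j, ← insF_iotaF ha w2 p1 j, h]

lemma insF_surj {m n' : ℕ} (a : ℕ) (ha : 1 ≤ a) (α : ℕ → ℕ) (hma : α (m + 1) = a)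
    (w : Fin (n' + a) → Fin (m + 1)) (hw : w ∈ Iset (m + 1) (n' + a) α) :
    ∃ (w' : Fin n' → Fin m) (p : Fin (n' + 1)),
      w' ∈ Iset m n' α ∧ insF a w' p = w := by
  classical
  rw [mem_Iset_iff] at hw
  obtain ⟨hc, hav⟩ := hw
  -- the set of positions of the top letter
  set T : Finset (Fin (n' + a)) := Finset.univ.filter (fun i => w i = Fin.last m) with hT
  have hTcard : T.card = a := by
    have := hc (m + 1) (Finset.mem_Icc.mpr ⟨by omega, le_refl _⟩)
    rw [hma] at this
    refine Eq.trans ?_ this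
    congr 1
    ext i
    simp only [hT, Finset.mem_filter, Finset.mem_univ, true_and]
    rw [Fin.ext_iff, Fin.val_last]
    omega
  have hTne : T.Nonempty := by
    rw [← Finset.card_pos, hTcard]; omega
  set p₀ : Fin (n' + a) := T.min' hTne with hp₀
  have hp₀T : p₀ ∈ T := T.min'_mem hTne
  have hp₀w : w p₀ = Fin.last m := by
    have := hp₀T
    rw [hT, Finset.mem_filter] at this
    exact this.2
  -- T minus p₀ is upward closed
  have hup : ∀ i ∈ T.erase p₀, ∀ k : Fin (n' + a), i ≤ k → k ∈ T.erase p₀ := by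
    intro i hi k hk
    rw [Finset.mem_erase] at hi
    obtain ⟨hine, hiT⟩ := hi
    have hp₀i : p₀ < i := lt_of_le_of_ne (T.min'_le i hiT) (Ne.symm hine)
    rcases eq_or_lt_of_le hk with he | hlt
    · subst he; exact Finset.mem_erase.mpr ⟨hine, hiT⟩
    · have hkT : k ∈ T := by
        rw [hT, Finset.mem_filter]
        refine ⟨Finset.mem_univ _, ?_⟩
        by_contra hne
        have hklt : w k < Fin.last m := lt_of_le_of_ne (Fin.le_last _) hne
        have hiw : w i = Fin.last m := by
          have := hiT; rw [hT, Finset.mem_filter] at this; exact this.2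
        exact hav ⟨p₀, i, k, hp₀i, hlt, by rw [hp₀w, hiw], by rw [hiw]; exact hklt⟩
      refine Finset.mem_erase.mpr ⟨?_, hkT⟩
      intro he
      rw [he] at hlt
      exact absurd (hp₀i.trans hlt) (lt_irrefl _)
  have hS := upward_closed_eq (n' + a) (T.erase p₀) hup
  have hScard : (T.erase p₀).card = a - 1 := by
    rw [Finset.card_erase_of_mem hp₀T, hTcard]
  have hchar : ∀ i : Fin (n' + a), w i = Fin.last m ↔ ((i : ℕ) = (p₀ : ℕ) ∨ n' + 1 ≤ (i : ℕ)) := by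
    intro i
    constructor
    · intro hw'
      have hiT : i ∈ T := by
        rw [hT, Finset.mem_filter]; exact ⟨Finset.mem_univ _, hw'⟩
      by_cases hip : i = p₀
      · left; rw [hip]
      · right
        have hmem : i ∈ T.erase p₀ := Finset.mem_erase.mpr ⟨hip, hiT⟩
        rw [hS] at hmem
        simp only [Finset.mem_filter, Finset.mem_univ, true_and] at hmem
        rw [hScard] at hmem
        omega
    · intro hi
      rcases hi with hi | hi
      · have he : i = p₀ := Fin.ext hi
        rw [he, hp₀w]
      · have hmem : i ∈ T.erase p₀ := by
          rw [hS]
          simp only [Finset.mem_filter, Finset.mem_univ, true_and]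
          rw [hScard]
          omega
        have h2 := (Finset.mem_erase.mp hmem).2
        rw [hT, Finset.mem_filter] at h2
        exact h2.2
  have hp₀le : (p₀ : ℕ) ≤ n' := by
    by_contra hcon
    have hmem : p₀ ∈ T.erase p₀ := by
      rw [hS]
      simp only [Finset.mem_filter, Finset.mem_univ, true_and]
      rw [hScard]
      omega
    exact absurd hmem (Finset.notMem_erase _ _)
  set P : Fin (n' + 1) := ⟨(p₀ : ℕ), by omega⟩ with hPdef
  have hPval : (P : ℕ) = (p₀ : ℕ) := rfl
  have hnl : ∀ j : Fin n', w (iotaF a ha P j) ≠ Fin.last m := by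
    intro j hlast
    obtain ⟨h1, h2⟩ := iotaF_val_ne ha P j
    rw [hchar] at hlast
    rw [hPval] at h1
    omega
  set w' : Fin n' → Fin m := fun j => (w (iotaF a ha P j)).castPred (hnl j) with hw'def
  have heq : insF a w' P = w := by
    funext i
    by_cases hi : (i : ℕ) = (P : ℕ) ∨ n' < (i : ℕ)
    · rw [(insF_eq_last_iff w' P i).mpr hi]
      refine ((hchar i).mpr ?_).symm
      rw [hPval] at hi
      omega
    · push_neg at hi
      obtain ⟨j, hj⟩ := iotaF_surj ha P i (by omega) hi.1
      rw [← hj, insF_iotaF ha w' P j, hw'def]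
      exact Fin.castSucc_castPred _ _
  refine ⟨w', P, ?_, heq⟩
  rw [mem_Iset_iff]
  constructor
  · intro j hj
    rw [Finset.mem_Icc] at hj
    have hcj := hc j (Finset.mem_Icc.mpr ⟨hj.1, by omega⟩)
    rw [← heq, card_insF_val ha w' P j hj.2] at hcj
    exact hcj
  · apply avoids_of_insF ha w' P
    rw [heq]
    exact hav

lemma stepF (m n' : ℕ) (α : ℕ → ℕ) (ha : 1 ≤ α (m + 1)) :
    ∑ w ∈ Iset (m + 1) (n' + α (m + 1)) α, (X : Polynomial ℤ) ^ inv w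
      = (∑ w ∈ Iset m n' α, (X : Polynomial ℤ) ^ inv w) * qint (n' + 1) := by
  classical
  set a := α (m + 1) with hadef
  have hsum : ∑ wp ∈ (Iset m n' α) ×ˢ (Finset.univ : Finset (Fin (n' + 1))),
      (X : Polynomial ℤ) ^ (inv wp.1 + (n' - (wp.2 : ℕ)))
      = ∑ w ∈ Iset (m + 1) (n' + a) α, (X : Polynomial ℤ) ^ inv w := by
    apply Finset.sum_bij (i := fun wp _ => insF a wp.1 wp.2)
    · rintro ⟨w', p⟩ hwp
      rw [Finset.mem_product] at hwp
      exact insF_mem_Iset a ha α rfl w' p hwp.1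
    · rintro ⟨w1, p1⟩ h1 ⟨w2, p2⟩ h2 he
      obtain ⟨hw, hp⟩ := insF_inj a ha w1 w2 p1 p2 he
      rw [Prod.ext_iff]
      exact ⟨hw, hp⟩
    · intro w hw
      obtain ⟨w', p, hmem, heq⟩ := insF_surj a ha α rfl w hw
      exact ⟨(w', p), Finset.mem_product.mpr ⟨hmem, Finset.mem_univ _⟩, heq⟩
    · rintro ⟨w', p⟩ hwp
      rw [inv_insF ha w' p]
  rw [← hsum, Finset.sum_product]
  rw [Finset.sum_mul]
  apply Finset.sum_congr rfl
  intro w' _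
  rw [← qint_sum_fin n', Finset.mul_sum]
  apply Finset.sum_congr rfl
  intro p _
  rw [← pow_add]

lemma keyF : ∀ (m n : ℕ) (α : ℕ → ℕ), (∀ j ∈ Finset.Icc 1 m, 0 < α j) →
    n = ∑ j ∈ Finset.Icc 1 m, α j →
    ∑ w ∈ Iset m n α, (X : Polynomial ℤ) ^ inv w
      = ∏ i ∈ Finset.Icc 1 (m - 1), qint ((∑ j ∈ Finset.Icc 1 i, α j) + 1) := by
  intro m
  induction m with
  | zero =>
    intro n α hα hn
    have hn0 : n = 0 := by
      rw [hn, Finset.Icc_eq_empty (by omega), Finset.sum_empty]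
    subst hn0
    have hIs : Iset 0 0 α = Finset.univ := by
      ext w
      rw [mem_Iset_iff]
      simp only [Finset.mem_univ, iff_true]
      constructor
      · intro j hj
        rw [Finset.mem_Icc] at hj
        omega
      · rintro ⟨i, _⟩
        exact i.elim0
    rw [hIs]
    have huniv : (Finset.univ : Finset (Fin 0 → Fin 0)) = {fun i => Fin.elim0 i} := by
      ext w
      simp only [Finset.mem_univ, Finset.mem_singleton, true_iff]
      funext i
      exact i.elim0
    rw [huniv, Finset.sum_singleton]
    have hinv : inv (fun i : Fin 0 => (Fin.elim0 i : Fin 0)) = 0 := by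
      rw [inv, Finset.card_eq_zero]
      ext q
      exact q.1.elim0
    rw [hinv, pow_zero, Finset.Icc_eq_empty (by omega), Finset.prod_empty]
  | succ m ih =>
    intro n α hα hn
    have hsum : ∑ j ∈ Finset.Icc 1 (m + 1), α j
        = (∑ j ∈ Finset.Icc 1 m, α j) + α (m + 1) := by
      rw [← Finset.sum_Icc_succ_top (by omega : 1 ≤ m + 1)]
    rw [hsum] at hn
    subst hn
    have ha : 1 ≤ α (m + 1) := hα (m + 1) (Finset.mem_Icc.mpr ⟨by omega, le_refl _⟩)
    rw [stepF m (∑ j ∈ Finset.Icc 1 m, α j) α ha]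
    rw [ih (∑ j ∈ Finset.Icc 1 m, α j) α
      (fun j hj => hα j (Finset.Icc_subset_Icc_right (by omega) hj)) rfl]
    rcases m with _ | k
    · rw [qint]
      simp
    · have h1 : (k + 1 + 1 : ℕ) - 1 = (k + 1) := rfl
      have h2 : (k + 1 : ℕ) - 1 = k := rfl
      rw [h1, h2]
      rw [← Finset.prod_Icc_succ_top (by omega : 1 ≤ k + 1)]

/-- for a composition `α = (α 1, …, α m)` of `n`,
`Σ_{w ∈ I_α} q^{inv w} = Π_{i=1}^{m−1} [α 1 + ⋯ + α i + 1]_q`, and in particular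
`|I_α| = Π_{i=1}^{m−1} (α 1 + ⋯ + α i + 1)`. -/
theorem inv_gen_fun_avoid221 (m n : ℕ) (α : ℕ → ℕ)
    (hα : ∀ j ∈ Finset.Icc 1 m, 0 < α j) (hn : n = ∑ j ∈ Finset.Icc 1 m, α j) :
    (∑ w ∈ Iset m n α, (X : Polynomial ℤ) ^ inv w =
      ∏ i ∈ Finset.Icc 1 (m - 1), qint ((∑ j ∈ Finset.Icc 1 i, α j) + 1)) ∧
    (Iset m n α).card = ∏ i ∈ Finset.Icc 1 (m - 1), ((∑ j ∈ Finset.Icc 1 i, α j) + 1) := by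
  have h1 := keyF m n α hα hn
  refine ⟨h1, ?_⟩
  have h2 := congrArg (Polynomial.eval (1 : ℤ)) h1
  rw [Polynomial.eval_finset_sum, Polynomial.eval_prod] at h2
  simp only [Polynomial.eval_pow, Polynomial.eval_X, one_pow] at h2
  rw [Finset.sum_const, nsmul_eq_mul, mul_one] at h2
  have hq : ∀ k : ℕ, (qint k).eval (1 : ℤ) = (k : ℤ) := by
    intro k
    rw [qint, Polynomial.eval_finset_sum]
    simp
  simp only [hq] at h2
  exact_mod_cast h2
end
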